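/- arXiv:0710.3878 — 2 statements merged into one kernel-verified Lean document; each statement's English description precedes it below -/
import Mathlib

section
/- For all real numbers a, b, l, m with m < b < a < l, the quantity z := ((l−a)(m−b))/((l−b)(m−a)) lies in [0,1), and the function E(l,m) := (l−b)^(−1/2) · (a−m)^(−1/2) · F(1/2, 1/2; 1; ((l−a)(m−b))/((l−b)(m−a))) satisfies the characteristic-form equation ∂²E/(∂l ∂m) − (1/(2(l−m))) · (∂E/∂l − ∂E/∂m) = 0. -/
open MeasureTheory Real intervalIntegral

/-- Rising factorial (Pochhammer symbol) `(q)_n = q (q+1) ⋯ (q+n−1)`. -/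
noncomputable def risingFactorial (q : ℝ) : ℕ → ℝ
  | 0 => 1
  | n + 1 => risingFactorial q n * (q + (n : ℝ))

/-- The Gauss hypergeometric function `F(a,b;c;x)` defined by its power series
`∑ ((a)_n (b)_n / ((c)_n n!)) x^n`. -/
noncomputable def hyperF (a b c x : ℝ) : ℝ :=
  ∑' n : ℕ, (risingFactorial a n * risingFactorial b n) /
    (risingFactorial c n * (Nat.factorial n : ℝ)) * x ^ n

/-- The function `E(l,m) = (l−b)^{−1/2} (a−m)^{−1/2} F(1/2,1/2;1;((l−a)(m−b))/((l−b)(m−a)))`. -/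
noncomputable def Echar (a b l m : ℝ) : ℝ :=
  (l - b) ^ (-(1 : ℝ) / 2) * (a - m) ^ (-(1 : ℝ) / 2) *
    hyperF (1 / 2) (1 / 2) 1 (((l - a) * (m - b)) / ((l - b) * (m - a)))

/-
The series `F = F(1/2, 1/2; 1; ·)` has coefficients `c n = ((1/2)_n / n!)²`, which satisfy
`(n + 1)² c (n + 1) = (n + 1/2)² c n`. Comparing coefficients, this recursion is exactly the
hypergeometric equation `z (1 - z) F'' + (1 - 2z) F' - F / 4 = 0` on `|z| < 1`.
Write `E = (l - b)^(-1/2) (a - m)^(-1/2) F(z)` with `z = z(l, m)` and apply the chain rule.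
The characteristic combination becomes the prefactor times a rational combination of
`F(z)`, `F'(z)` and `F''(z)`, and this combination is a rational multiple of the
hypergeometric equation.
-/

noncomputable def powerSum (e : ℕ → ℝ) (z : ℝ) : ℝ := ∑' n, e n * z ^ n

def derivCoeff (e : ℕ → ℝ) (n : ℕ) : ℝ := (n + 1) * e (n + 1)

section PowerSeries

variable {e : ℕ → ℝ} {C z : ℝ}

lemma summable_succ_mul_geometric {r : ℝ} (hr : |r| < 1) :
    Summable fun n : ℕ => ((n : ℝ) + 1) * r ^ n := by
  simpa using
    summable_choose_mul_geometric_of_norm_lt_one 1 (r := r) (by rwa [Real.norm_eq_abs])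

lemma summable_mul_pow_of_abs_le (he : ∀ n, |e n| ≤ C) (hz : |z| < 1) :
    Summable fun n => e n * z ^ n := by
  refine .of_norm_bounded
    ((summable_geometric_of_lt_one (abs_nonneg z) hz).mul_left C) fun n => ?_
  rw [norm_mul, norm_pow, Real.norm_eq_abs, Real.norm_eq_abs]
  exact mul_le_mul_of_nonneg_right (he n) (by positivity)

lemma summable_derivCoeff_mul_pow (he : ∀ n, |e n| ≤ C) (hz : |z| < 1) :
    Summable fun n => derivCoeff e n * z ^ n := by
  refine .of_norm_bounded
    ((summable_succ_mul_geometric (r := |z|) (by rwa [abs_abs])).mul_left C) fun n => ?_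
  rw [derivCoeff, norm_mul, norm_mul, norm_pow, Real.norm_eq_abs, Real.norm_eq_abs,
    Real.norm_eq_abs, abs_of_nonneg (by positivity : (0 : ℝ) ≤ n + 1)]
  linarith [mul_le_mul_of_nonneg_right (he (n + 1)) (by positivity : 0 ≤ (n + 1) * |z| ^ n)]

lemma hasDerivAt_powerSum (he : ∀ n, |e n| ≤ C) (hz : |z| < 1) :
    HasDerivAt (powerSum e) (powerSum (derivCoeff e) z) z := by
  obtain ⟨r, hzr, hr⟩ := exists_between hz
  have hr0 : 0 ≤ r := (abs_nonneg z).trans hzr.le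
  have hbound : ∀ n (y : ℝ), y ∈ Metric.ball (0 : ℝ) r →
      ‖e n * ((n : ℝ) * y ^ (n - 1))‖ ≤ C * ((n : ℝ) * r ^ (n - 1)) := by
    intro n y hy
    rw [Metric.mem_ball, dist_zero_right] at hy
    rw [norm_mul, norm_mul, norm_pow, Real.norm_natCast, Real.norm_eq_abs]
    gcongr
    · exact (abs_nonneg _).trans (he 0)
    · exact he n
  have hu : Summable fun n : ℕ => C * ((n : ℝ) * r ^ (n - 1)) := by
    refine Summable.mul_left C ((summable_nat_add_iff 1).mp ?_)
    simpa using summable_succ_mul_geometric (by rwa [abs_of_nonneg hr0])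
  have key := hasDerivAt_tsum_of_isPreconnected hu Metric.isOpen_ball
    (convex_ball (0 : ℝ) r).isPreconnected (fun n y _ => (hasDerivAt_pow n y).const_mul (e n))
    hbound (Metric.mem_ball_self (hzr.trans_le' (abs_nonneg z)))
    (summable_mul_pow_of_abs_le he (by simp)) (by simpa using hzr)
  have hshift : ∀ n : ℕ,
      e (n + 1) * ((n + 1 : ℕ) * z ^ (n + 1 - 1)) = derivCoeff e n * z ^ n := by
    intro n
    simp only [derivCoeff, Nat.cast_succ, Nat.add_sub_cancel]
    ring
  rw [tsum_eq_zero_add' (by simpa only [hshift] using summable_derivCoeff_mul_pow he hz)] at key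
  simp only [hshift, CharP.cast_eq_zero, zero_mul, mul_zero, zero_add] at key
  exact key

lemma hasSum_mul_pow_of_succ {s : ℝ} (h0 : e 0 = 0)
    (h : HasSum (fun n => e (n + 1) * z ^ n) s) : HasSum (fun n => e n * z ^ n) (z * s) := by
  rw [← hasSum_nat_add_iff' 1, Finset.sum_range_one, h0, zero_mul, sub_zero]
  have hterm : (fun n => e (n + 1) * z ^ (n + 1)) = fun n => z * (e (n + 1) * z ^ n) := by
    ext n
    ring
  exact hterm ▸ h.mul_left z

end PowerSeries

lemma risingFactorial_one (n : ℕ) : risingFactorial 1 n = n.factorial := by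
  induction n with
  | zero => simp [risingFactorial]
  | succ n ih =>
    simp only [risingFactorial, ih, Nat.factorial_succ, Nat.cast_mul, Nat.cast_succ]
    ring

noncomputable def hyperCoeff (n : ℕ) : ℝ := (risingFactorial (1 / 2) n / n.factorial) ^ 2

lemma hyperF_half_half_one (x : ℝ) : hyperF (1 / 2) (1 / 2) 1 x = powerSum hyperCoeff x := by
  refine tsum_congr fun n => ?_
  rw [risingFactorial_one, hyperCoeff, div_pow, sq, sq]

lemma hyperCoeff_succ (n : ℕ) :
    hyperCoeff (n + 1) * (n + 1) ^ 2 = hyperCoeff n * (n + 1 / 2) ^ 2 := by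
  simp only [hyperCoeff, risingFactorial, Nat.factorial_succ]
  push_cast
  field_simp
  ring

lemma hyperCoeff_nonneg (n : ℕ) : 0 ≤ hyperCoeff n := sq_nonneg _

lemma hyperCoeff_mul_succ_le_one (n : ℕ) : hyperCoeff n * (n + 1) ≤ 1 := by
  induction n with
  | zero => simp [hyperCoeff, risingFactorial]
  | succ n ih =>
    have hn : (0 : ℝ) ≤ n := n.cast_nonneg
    have key : hyperCoeff (n + 1) * (n + 2) * (n + 1) ^ 3 ≤ 1 * (n + 1) ^ 3 :=
      calc _ = hyperCoeff n * (n + 1) * ((n + 1 / 2) ^ 2 * (n + 2)) := by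
            linear_combination ((n : ℝ) + 1) * (n + 2) * hyperCoeff_succ n
        _ ≤ 1 * ((n + 1 / 2) ^ 2 * (n + 2)) := by gcongr
        _ ≤ 1 * (n + 1) ^ 3 := by nlinarith
    push_cast
    linarith [le_of_mul_le_mul_right key (by positivity)]

lemma abs_hyperCoeff_le_one (n : ℕ) : |hyperCoeff n| ≤ 1 := by
  rw [abs_of_nonneg (hyperCoeff_nonneg n)]
  nlinarith [hyperCoeff_mul_succ_le_one n, hyperCoeff_nonneg n, (n.cast_nonneg : (0 : ℝ) ≤ n)]

lemma abs_derivCoeff_hyperCoeff_le_one (n : ℕ) : |derivCoeff hyperCoeff n| ≤ 1 := by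
  rw [derivCoeff, abs_of_nonneg (mul_nonneg (by positivity) (hyperCoeff_nonneg _))]
  have := hyperCoeff_mul_succ_le_one (n + 1)
  push_cast at this
  nlinarith [hyperCoeff_nonneg (n + 1)]

theorem hyperCoeff_ode {z : ℝ} (hz : |z| < 1) :
    z * (1 - z) * powerSum (derivCoeff (derivCoeff hyperCoeff)) z
      + (1 - 2 * z) * powerSum (derivCoeff hyperCoeff) z - powerSum hyperCoeff z / 4 = 0 := by
  have hF : HasSum (fun n => hyperCoeff n * z ^ n) (powerSum hyperCoeff z) :=
    (summable_mul_pow_of_abs_le abs_hyperCoeff_le_one hz).hasSum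
  have hF' : HasSum (fun n => derivCoeff hyperCoeff n * z ^ n)
      (powerSum (derivCoeff hyperCoeff) z) :=
    (summable_derivCoeff_mul_pow abs_hyperCoeff_le_one hz).hasSum
  have hF'' : HasSum (fun n => derivCoeff (derivCoeff hyperCoeff) n * z ^ n)
      (powerSum (derivCoeff (derivCoeff hyperCoeff)) z) :=
    (summable_derivCoeff_mul_pow abs_derivCoeff_hyperCoeff_le_one hz).hasSum
  have hzF' : HasSum (fun n => (n * hyperCoeff n) * z ^ n)
      (z * powerSum (derivCoeff hyperCoeff) z) :=
    hasSum_mul_pow_of_succ (by simp) (by simpa only [derivCoeff, Nat.cast_succ] using hF')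
  have hzF'' : HasSum (fun n => (n * derivCoeff hyperCoeff n) * z ^ n)
      (z * powerSum (derivCoeff (derivCoeff hyperCoeff)) z) :=
    hasSum_mul_pow_of_succ (by simp) (by simpa only [derivCoeff, Nat.cast_succ] using hF'')
  have hz2F'' : HasSum (fun n => ((n - 1) * (n * hyperCoeff n)) * z ^ n)
      (z * (z * powerSum (derivCoeff (derivCoeff hyperCoeff)) z)) :=
    hasSum_mul_pow_of_succ (by simp) (by simpa [derivCoeff] using hzF'')
  have hterm : ∀ n : ℕ,
      n * derivCoeff hyperCoeff n * z ^ n - (n - 1) * (n * hyperCoeff n) * z ^ n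
      + (derivCoeff hyperCoeff n * z ^ n - 2 * (n * hyperCoeff n * z ^ n))
      - hyperCoeff n * z ^ n / 4 = 0 := by
    intro n
    simp only [derivCoeff]
    linear_combination z ^ n * hyperCoeff_succ n
  have hsum := ((hzF''.sub hz2F'').add (hF'.sub (hzF'.mul_left 2))).sub (hF.div_const 4)
  simp only [hterm] at hsum
  linear_combination hsum.unique hasSum_zero

noncomputable def hyperArg (a b l m : ℝ) : ℝ := ((l - a) * (m - b)) / ((l - b) * (m - a))

noncomputable def hyperArgDerivLeft (a b l m : ℝ) : ℝ :=
  (a - b) * (m - b) / ((l - b) ^ 2 * (m - a))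

noncomputable def hyperArgDerivRight (a b l m : ℝ) : ℝ :=
  (b - a) * (l - a) / ((l - b) * (m - a) ^ 2)

noncomputable def hyperArgDerivLeftRight (a b l m : ℝ) : ℝ :=
  -(a - b) ^ 2 / ((l - b) ^ 2 * (m - a) ^ 2)

lemma hasDerivAt_rpow_neg_half {x : ℝ} (hx : x ≠ 0) :
    HasDerivAt (fun y => y ^ (-(1 : ℝ) / 2)) (-x ^ (-(1 : ℝ) / 2) / (2 * x)) x :=
  (Real.hasDerivAt_rpow_const (Or.inl hx)).congr_deriv (by rw [Real.rpow_sub_one hx]; ring)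

section Characteristic

variable {a b l m : ℝ}

lemma hyperArg_mem_Ioo (h1 : m < b) (h2 : b < a) (h3 : a < l) :
    hyperArg a b l m ∈ Set.Ioo 0 1 := by
  have hden : (l - b) * (m - a) < 0 := mul_neg_of_pos_of_neg (by linarith) (by linarith)
  refine ⟨div_pos_of_neg_of_neg (mul_neg_of_pos_of_neg (by linarith) (by linarith)) hden, ?_⟩
  rw [hyperArg, div_lt_one_of_neg hden]
  nlinarith

lemma abs_hyperArg_lt_one (h1 : m < b) (h2 : b < a) (h3 : a < l) : |hyperArg a b l m| < 1 := by
  obtain ⟨hpos, hlt⟩ := hyperArg_mem_Ioo h1 h2 h3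
  rwa [abs_of_pos hpos]

lemma hasDerivAt_hyperArg_left (hl : l ≠ b) (hm : m ≠ a) :
    HasDerivAt (fun l' => hyperArg a b l' m) (hyperArgDerivLeft a b l m) l := by
  have hden : (l - b) * (m - a) ≠ 0 := mul_ne_zero (sub_ne_zero.2 hl) (sub_ne_zero.2 hm)
  refine (((hasDerivAt_id' l).sub_const a).mul_const (m - b)).div
    (((hasDerivAt_id' l).sub_const b).mul_const (m - a)) hden |>.congr_deriv ?_
  rw [hyperArgDerivLeft]
  field_simp
  ring

lemma hasDerivAt_hyperArg_right (hl : l ≠ b) (hm : m ≠ a) :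
    HasDerivAt (fun m' => hyperArg a b l m') (hyperArgDerivRight a b l m) m := by
  have hden : (l - b) * (m - a) ≠ 0 := mul_ne_zero (sub_ne_zero.2 hl) (sub_ne_zero.2 hm)
  refine (((hasDerivAt_id' m).sub_const b).const_mul (l - a)).div
    (((hasDerivAt_id' m).sub_const a).const_mul (l - b)) hden |>.congr_deriv ?_
  rw [hyperArgDerivRight]
  field_simp
  ring

lemma hasDerivAt_hyperArgDerivLeft_right (hl : l ≠ b) (hm : m ≠ a) :
    HasDerivAt (fun m' => hyperArgDerivLeft a b l m') (hyperArgDerivLeftRight a b l m) m := by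
  have hden : (l - b) ^ 2 * (m - a) ≠ 0 :=
    mul_ne_zero (pow_ne_zero 2 (sub_ne_zero.2 hl)) (sub_ne_zero.2 hm)
  refine (((hasDerivAt_id' m).sub_const b).const_mul (a - b)).div
    (((hasDerivAt_id' m).sub_const a).const_mul ((l - b) ^ 2)) hden |>.congr_deriv ?_
  rw [hyperArgDerivLeftRight]
  field_simp
  ring

lemma Echar_eq : Echar a b l m = (l - b) ^ (-(1 : ℝ) / 2) * (a - m) ^ (-(1 : ℝ) / 2) *
    powerSum hyperCoeff (hyperArg a b l m) := by
  rw [Echar, hyperF_half_half_one, hyperArg]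

noncomputable def echarDerivLeft (a b l m : ℝ) : ℝ :=
  (l - b) ^ (-(1 : ℝ) / 2) * (a - m) ^ (-(1 : ℝ) / 2) *
    (powerSum (derivCoeff hyperCoeff) (hyperArg a b l m) * hyperArgDerivLeft a b l m
      - powerSum hyperCoeff (hyperArg a b l m) / (2 * (l - b)))

lemma hasDerivAt_Echar_left (hl : l ≠ b) (hm : m ≠ a) (hz : |hyperArg a b l m| < 1) :
    HasDerivAt (fun l' => Echar a b l' m) (echarDerivLeft a b l m) l := by
  have hF := HasDerivAt.comp (h := fun l' => hyperArg a b l' m) l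
    (hasDerivAt_powerSum abs_hyperCoeff_le_one hz) (hasDerivAt_hyperArg_left hl hm)
  have hP := (hasDerivAt_rpow_neg_half (sub_ne_zero.2 hl)).comp l
    ((hasDerivAt_id' l).sub_const b)
  simp_rw [Echar_eq]
  refine ((hP.mul_const ((a - m) ^ (-(1 : ℝ) / 2))).mul hF).congr_deriv ?_
  rw [echarDerivLeft]
  simp only [Function.comp_apply]
  ring

lemma hasDerivAt_Echar_right (hl : l ≠ b) (hm : m ≠ a) (hz : |hyperArg a b l m| < 1) :
    HasDerivAt (fun m' => Echar a b l m')
      ((l - b) ^ (-(1 : ℝ) / 2) * (a - m) ^ (-(1 : ℝ) / 2) *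
        (powerSum (derivCoeff hyperCoeff) (hyperArg a b l m) * hyperArgDerivRight a b l m
          + powerSum hyperCoeff (hyperArg a b l m) / (2 * (a - m)))) m := by
  have hF := HasDerivAt.comp (h := fun m' => hyperArg a b l m') m
    (hasDerivAt_powerSum abs_hyperCoeff_le_one hz) (hasDerivAt_hyperArg_right hl hm)
  have hQ := (hasDerivAt_rpow_neg_half (sub_ne_zero.2 hm.symm)).comp m
    ((hasDerivAt_id' m).const_sub a)
  simp_rw [Echar_eq]
  refine ((hQ.const_mul ((l - b) ^ (-(1 : ℝ) / 2))).mul hF).congr_deriv ?_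
  simp only [Function.comp_apply]
  ring

lemma hasDerivAt_echarDerivLeft_right (hl : l ≠ b) (hm : m ≠ a)
    (hz : |hyperArg a b l m| < 1) :
    HasDerivAt (fun m' => echarDerivLeft a b l m')
      ((l - b) ^ (-(1 : ℝ) / 2) * (a - m) ^ (-(1 : ℝ) / 2) *
        ((powerSum (derivCoeff hyperCoeff) (hyperArg a b l m) * hyperArgDerivLeft a b l m
            - powerSum hyperCoeff (hyperArg a b l m) / (2 * (l - b))) / (2 * (a - m))
          + powerSum (derivCoeff (derivCoeff hyperCoeff)) (hyperArg a b l m)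
            * hyperArgDerivRight a b l m * hyperArgDerivLeft a b l m
          + powerSum (derivCoeff hyperCoeff) (hyperArg a b l m) * hyperArgDerivLeftRight a b l m
          - powerSum (derivCoeff hyperCoeff) (hyperArg a b l m) * hyperArgDerivRight a b l m
            / (2 * (l - b)))) m := by
  have hzm := hasDerivAt_hyperArg_right hl hm
  have hF := HasDerivAt.comp (h := fun m' => hyperArg a b l m') m
    (hasDerivAt_powerSum abs_hyperCoeff_le_one hz) hzm
  have hF' := HasDerivAt.comp (h := fun m' => hyperArg a b l m') m
    (hasDerivAt_powerSum abs_derivCoeff_hyperCoeff_le_one hz) hzm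
  have hQ := (hasDerivAt_rpow_neg_half (sub_ne_zero.2 hm.symm)).comp m
    ((hasDerivAt_id' m).const_sub a)
  have hbracket := (hF'.mul (hasDerivAt_hyperArgDerivLeft_right hl hm)).sub
    (hF.div_const (2 * (l - b)))
  unfold echarDerivLeft
  refine ((hQ.const_mul ((l - b) ^ (-(1 : ℝ) / 2))).mul hbracket).congr_deriv ?_
  simp only [Function.comp_apply, Pi.mul_apply, Pi.sub_apply]
  ring

lemma characteristic_combination_eq_zero {F₀ F₁ F₂ : ℝ} (hl : l ≠ b) (hm : m ≠ a) (hlm : l ≠ m)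
    (hode : hyperArg a b l m * (1 - hyperArg a b l m) * F₂ + (1 - 2 * hyperArg a b l m) * F₁
      - F₀ / 4 = 0) :
    (F₁ * hyperArgDerivLeft a b l m - F₀ / (2 * (l - b))) / (2 * (a - m))
      + F₂ * hyperArgDerivRight a b l m * hyperArgDerivLeft a b l m
      + F₁ * hyperArgDerivLeftRight a b l m - F₁ * hyperArgDerivRight a b l m / (2 * (l - b))
      - 1 / (2 * (l - m)) * ((F₁ * hyperArgDerivLeft a b l m - F₀ / (2 * (l - b)))
        - (F₁ * hyperArgDerivRight a b l m + F₀ / (2 * (a - m)))) = 0 := by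
  have hlb : l - b ≠ 0 := sub_ne_zero.2 hl
  have hma : m - a ≠ 0 := sub_ne_zero.2 hm
  have ham : a - m ≠ 0 := sub_ne_zero.2 hm.symm
  have hlm : l - m ≠ 0 := sub_ne_zero.2 hlm
  -- `z_l z_m = z (1 - z) (a - b) / ((l - b) (m - a) (l - m))`, which fixes the multiplier.
  rw [← mul_zero ((a - b) / ((l - b) * (m - a) * (l - m))), ← hode]
  simp only [hyperArg, hyperArgDerivLeft, hyperArgDerivRight, hyperArgDerivLeftRight]
  field_simp
  ring

end Characteristic

theorem statement0 (a b l m : ℝ) (h1 : m < b) (h2 : b < a) (h3 : a < l) :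
    (0 ≤ ((l - a) * (m - b)) / ((l - b) * (m - a)) ∧
      ((l - a) * (m - b)) / ((l - b) * (m - a)) < 1) ∧
    deriv (fun m' => deriv (fun l' => Echar a b l' m') l) m
      - 1 / (2 * (l - m)) *
        (deriv (fun l' => Echar a b l' m) l - deriv (fun m' => Echar a b l m') m) = 0 := by
  obtain ⟨hz0, hz1⟩ := hyperArg_mem_Ioo h1 h2 h3
  refine ⟨⟨hz0.le, hz1⟩, ?_⟩
  have hl : l ≠ b := (h2.trans h3).ne'
  have hm : m ≠ a := (h1.trans h2).ne
  have hz := abs_hyperArg_lt_one h1 h2 h3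
  have hEl : (fun m' => deriv (fun l' => Echar a b l' m') l) =ᶠ[nhds m]
      fun m' => echarDerivLeft a b l m' := by
    filter_upwards [Iio_mem_nhds h1] with m' hm'
    exact (hasDerivAt_Echar_left hl (hm'.trans h2).ne (abs_hyperArg_lt_one hm' h2 h3)).deriv
  rw [hEl.deriv_eq, (hasDerivAt_echarDerivLeft_right hl hm hz).deriv,
    (hasDerivAt_Echar_left hl hm hz).deriv, (hasDerivAt_Echar_right hl hm hz).deriv,
    echarDerivLeft]
  have hlm : l ≠ m := (h1.trans (h2.trans h3)).ne'
  linear_combination (l - b) ^ (-(1 : ℝ) / 2) * (a - m) ^ (-(1 : ℝ) / 2) *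
    characteristic_combination_eq_zero hl hm hlm (hyperCoeff_ode hz)
end

section
/- Let a ∈ ℝ with −1 < a ≤ 0. Then there exists a constant C > 0 such that for all z > 1: ∫_0^{z−1} r^a ((z+1)² − r²)^{−1/2} · F(1/2, 1/2; 1; ((z−1)² − r²)/((z+1)² − r²)) dr ≤ C z^{−1} (z − 1)^{1+a} (1 + ln z). -/
open MeasureTheory Real intervalIntegral

lemma risingFactorial_half_sq_mul_le (n : ℕ) :
    risingFactorial (1 / 2) n ^ 2 * (2 * n + 1) ≤ (n.factorial : ℝ) ^ 2 := by
  induction n with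
  | zero => norm_num [risingFactorial]
  | succ n ih =>
    have hn : (0 : ℝ) ≤ n := n.cast_nonneg
    rw [risingFactorial, Nat.factorial_succ]
    push_cast
    nlinarith [sq_nonneg (risingFactorial (1 / 2) n),
      mul_le_mul_of_nonneg_right ih (by positivity : (0 : ℝ) ≤ (1 / 2 + n) ^ 2 * (2 * n + 3))]

/-- `F(1/2,1/2;1;x) = ∑ ellipticCoeff n * x ^ n` is the series of `2 K(√x) / π`. -/
noncomputable def ellipticCoeff (n : ℕ) : ℝ := (risingFactorial (1 / 2) n / n.factorial) ^ 2

lemma ellipticCoeff_nonneg (n : ℕ) : 0 ≤ ellipticCoeff n := sq_nonneg _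

lemma ellipticCoeff_zero : ellipticCoeff 0 = 1 := by norm_num [ellipticCoeff, risingFactorial]

lemma ellipticCoeff_le (n : ℕ) : ellipticCoeff n ≤ 1 / (2 * n + 1) := by
  have hf : (0 : ℝ) < n.factorial := by exact_mod_cast n.factorial_pos
  rw [ellipticCoeff, div_pow, div_le_div_iff₀ (by positivity) (by positivity)]
  linarith [risingFactorial_half_sq_mul_le n]

lemma ellipticCoeff_le_one (n : ℕ) : ellipticCoeff n ≤ 1 :=
  (ellipticCoeff_le n).trans <| by
    rw [div_le_one (by positivity)]
    linarith [(n.cast_nonneg : (0 : ℝ) ≤ n)]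

lemma ellipticCoeff_succ_le (n : ℕ) : ellipticCoeff (n + 1) ≤ 1 / (n + 1) :=
  (ellipticCoeff_le (n + 1)).trans <| by
    gcongr
    push_cast
    linarith [(n.cast_nonneg : (0 : ℝ) ≤ n)]

lemma hyperF_half_half_one_s17 (x : ℝ) :
    hyperF (1 / 2) (1 / 2) 1 x = ∑' n : ℕ, ellipticCoeff n * x ^ n := by
  refine tsum_congr fun n => ?_
  have hf : (n.factorial : ℝ) ≠ 0 := by exact_mod_cast n.factorial_ne_zero
  rw [risingFactorial_one, ellipticCoeff, div_pow]
  field_simp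

lemma ellipticCoeff_mul_pow_le {x : ℝ} (hx : 0 ≤ x) (n : ℕ) :
    ellipticCoeff n * x ^ n ≤ x ^ n :=
  mul_le_of_le_one_left (pow_nonneg hx n) (ellipticCoeff_le_one n)

lemma summable_ellipticCoeff_mul_pow {x : ℝ} (hx0 : 0 ≤ x) (hx1 : x < 1) :
    Summable fun n : ℕ => ellipticCoeff n * x ^ n :=
  .of_nonneg_of_le (fun n => mul_nonneg (ellipticCoeff_nonneg n) (pow_nonneg hx0 n))
    (ellipticCoeff_mul_pow_le hx0) (summable_geometric_of_lt_one hx0 hx1)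

lemma hyperF_half_half_one_nonneg {x : ℝ} (hx : 0 ≤ x) : 0 ≤ hyperF (1 / 2) (1 / 2) 1 x := by
  rw [hyperF_half_half_one_s17]
  exact tsum_nonneg fun n => mul_nonneg (ellipticCoeff_nonneg n) (pow_nonneg hx n)

lemma hyperF_half_half_one_le {x : ℝ} (hx0 : 0 ≤ x) (hx1 : x < 1) :
    hyperF (1 / 2) (1 / 2) 1 x ≤ 1 - log (1 - x) := by
  have hlog : HasSum (fun n : ℕ => x ^ (n + 1) / (n + 1)) (-log (1 - x)) :=
    hasSum_pow_div_log_of_abs_lt_one (by rwa [abs_of_nonneg hx0])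
  have hsum := summable_ellipticCoeff_mul_pow hx0 hx1
  have htail : ∑' n : ℕ, ellipticCoeff (n + 1) * x ^ (n + 1) ≤ -log (1 - x) := by
    refine hlog.tsum_eq ▸ Summable.tsum_le_tsum (fun n => ?_)
      (hsum.comp_injective (add_left_injective 1)) hlog.summable
    rw [div_eq_mul_one_div, mul_comm]
    exact mul_le_mul_of_nonneg_left (ellipticCoeff_succ_le n) (by positivity)
  rw [hyperF_half_half_one_s17, hsum.tsum_eq_zero_add, ellipticCoeff_zero, pow_zero, mul_one]
  linarith

lemma continuousOn_hyperF_half_half_one {X : ℝ} (hX0 : 0 ≤ X) (hX1 : X < 1) :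
    ContinuousOn (hyperF (1 / 2) (1 / 2) 1) (Set.Icc (-X) X) := by
  rw [show hyperF (1 / 2) (1 / 2) 1 = _ from funext hyperF_half_half_one_s17]
  refine continuousOn_tsum (fun n => (continuous_const.mul (continuous_pow n)).continuousOn)
    (summable_geometric_of_lt_one hX0 hX1) fun n x hx => ?_
  rw [norm_mul, norm_pow, Real.norm_of_nonneg (ellipticCoeff_nonneg n), Real.norm_eq_abs]
  exact (ellipticCoeff_mul_pow_le (abs_nonneg x) n).trans
    (pow_le_pow_left₀ (abs_nonneg x) (abs_le.2 hx) n)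

lemma hyperF_half_half_one_le_one_add_log {z r : ℝ} (hz : 1 < z) (hr0 : 0 ≤ r) (hr : r ≤ z - 1) :
    hyperF (1 / 2) (1 / 2) 1 (((z - 1) ^ 2 - r ^ 2) / ((z + 1) ^ 2 - r ^ 2)) ≤ 1 + log z := by
  have hD : 0 < (z + 1) ^ 2 - r ^ 2 := by nlinarith
  have hx0 : 0 ≤ ((z - 1) ^ 2 - r ^ 2) / ((z + 1) ^ 2 - r ^ 2) := div_nonneg (by nlinarith) hD.le
  have hx1 : ((z - 1) ^ 2 - r ^ 2) / ((z + 1) ^ 2 - r ^ 2) < 1 := by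
    rw [div_lt_one hD]; linarith
  have hgap : z⁻¹ ≤ 1 - ((z - 1) ^ 2 - r ^ 2) / ((z + 1) ^ 2 - r ^ 2) := by
    rw [one_sub_div hD.ne', inv_eq_one_div, div_le_div_iff₀ (by linarith) hD]
    nlinarith
  have hlog := log_le_log (inv_pos.2 (by linarith)) hgap
  rw [log_inv] at hlog
  linarith [hyperF_half_half_one_le hx0 hx1]

lemma sq_sub_sq_rpow_neg_half_le {c r : ℝ} (hr0 : 0 ≤ r) (hrc : r < c) :
    (c ^ 2 - r ^ 2) ^ (-(1 : ℝ) / 2) ≤ c ^ (-(1 : ℝ) / 2) * (c - r) ^ (-(1 : ℝ) / 2) := by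
  rw [← mul_rpow (by linarith) (by linarith)]
  exact rpow_le_rpow_of_nonpos (by nlinarith) (by nlinarith) (by norm_num)

lemma div_four_rpow_neg_half {x : ℝ} (hx : 0 ≤ x) :
    (x / 4) ^ (-(1 : ℝ) / 2) = 2 * x ^ (-(1 : ℝ) / 2) := by
  rw [div_rpow hx (by norm_num), div_eq_mul_inv, mul_comm, ← rpow_neg (by norm_num),
    show -(-(1 : ℝ) / 2) = 1 / 2 by norm_num, show (4 : ℝ) = 2 ^ (2 : ℝ) by norm_num,
    ← rpow_mul (by norm_num)]
  norm_num

lemma rpow_mul_rpow_neg_half_le {a z r : ℝ} (ha1 : -1 ≤ a) (ha2 : a ≤ 0) (hz : 1 < z)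
    (hr0 : 0 ≤ r) (hr : r ≤ z - 1) :
    r ^ a * (z + 1 - r) ^ (-(1 : ℝ) / 2) ≤
      2 * z ^ (-(1 : ℝ) / 2) * r ^ a + 2 * (z - 1) ^ a * (z + 1 - r) ^ (-(1 : ℝ) / 2) := by
  have hra : 0 ≤ r ^ a := rpow_nonneg hr0 a
  have hk : 0 ≤ (z + 1 - r) ^ (-(1 : ℝ) / 2) := rpow_nonneg (by linarith) _
  rcases le_total r ((z - 1) / 2) with hsmall | hlarge
  · have : (z + 1 - r) ^ (-(1 : ℝ) / 2) ≤ 2 * z ^ (-(1 : ℝ) / 2) := by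
      rw [← div_four_rpow_neg_half (by linarith)]
      exact rpow_le_rpow_of_nonpos (by linarith) (by linarith) (by norm_num)
    nlinarith [rpow_nonneg (by linarith : (0 : ℝ) ≤ z - 1) a]
  · have h2a : (2 : ℝ)⁻¹ ≤ 2 ^ a := by
      simpa [rpow_neg_one] using rpow_le_rpow_of_exponent_le (by norm_num : (1 : ℝ) ≤ 2) ha1
    have : r ^ a ≤ 2 * (z - 1) ^ a := by
      refine (rpow_le_rpow_of_nonpos (by linarith) hlarge ha2).trans ?_
      rw [div_rpow (by linarith) (by norm_num), div_le_iff₀ (by positivity)]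
      nlinarith [rpow_nonneg (by linarith : (0 : ℝ) ≤ z - 1) a]
    nlinarith [rpow_nonneg (by linarith : (0 : ℝ) ≤ z) (-(1 : ℝ) / 2)]

lemma integral_sub_rpow_neg_half_le {z : ℝ} (hz : 1 ≤ z) :
    ∫ r in (0 : ℝ)..(z - 1), (z + 1 - r) ^ (-(1 : ℝ) / 2) ≤ 2 * (z - 1) * z ^ (-(1 : ℝ) / 2) := by
  rw [integral_comp_sub_left (fun u : ℝ => u ^ (-(1 : ℝ) / 2)), sub_zero,
    show z + 1 - (z - 1) = 2 by ring, integral_rpow (Or.inl (by norm_num)),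
    show -(1 : ℝ) / 2 + 1 = 1 / 2 by norm_num, ← sqrt_eq_rpow, ← sqrt_eq_rpow,
    show -(1 : ℝ) / 2 = -(1 / 2) by norm_num, rpow_neg (by linarith), ← sqrt_eq_rpow,
    ← div_eq_mul_inv, le_div_iff₀ (by positivity)]
  -- `(√(z+1) - √2) √z ≤ (√(z+1) - √2) √(z+1) ≤ (√(z+1) - √2)(√(z+1) + √2) = z - 1`
  have hp := sq_sqrt (by linarith : (0 : ℝ) ≤ z + 1)
  have hq := sq_sqrt (by norm_num : (0 : ℝ) ≤ 2)
  have hs : √z ≤ √(z + 1) := sqrt_le_sqrt (by linarith)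
  have hqp : √2 ≤ √(z + 1) := sqrt_le_sqrt (by linarith)
  nlinarith [mul_le_mul_of_nonneg_left hs (sub_nonneg.2 hqp), sqrt_nonneg 2, sqrt_nonneg z]

lemma intervalIntegrable_rpow_mul_sub_rpow_neg_half {a z : ℝ} (ha : -1 < a) (hz : 1 ≤ z) :
    IntervalIntegrable (fun r => r ^ a * (z + 1 - r) ^ (-(1 : ℝ) / 2)) volume 0 (z - 1) := by
  refine (intervalIntegrable_rpow' ha).mul_continuousOn
    (ContinuousOn.rpow_const (by fun_prop) fun r hr => Or.inl ?_)
  rw [Set.uIcc_of_le (by linarith)] at hr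
  linarith [hr.2]

lemma integral_rpow_mul_sub_rpow_neg_half_le {a z : ℝ} (ha1 : -1 < a) (ha2 : a ≤ 0) (hz : 1 < z) :
    ∫ r in (0 : ℝ)..(z - 1), r ^ a * (z + 1 - r) ^ (-(1 : ℝ) / 2) ≤
      (2 / (1 + a) + 4) * z ^ (-(1 : ℝ) / 2) * (z - 1) ^ (1 + a) := by
  have hb : 0 ≤ z - 1 := by linarith
  have hint1 : IntervalIntegrable (fun r => 2 * z ^ (-(1 : ℝ) / 2) * r ^ a) volume 0 (z - 1) :=
    (intervalIntegrable_rpow' ha1).const_mul _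
  have hint2 : IntervalIntegrable (fun r => 2 * (z - 1) ^ a * (z + 1 - r) ^ (-(1 : ℝ) / 2))
      volume 0 (z - 1) := by
    simpa using (intervalIntegrable_rpow_mul_sub_rpow_neg_half (a := 0) (by norm_num)
      hz.le).const_mul (2 * (z - 1) ^ a)
  refine (integral_mono_on hb (intervalIntegrable_rpow_mul_sub_rpow_neg_half ha1 hz.le)
    (hint1.add hint2) fun r hr => rpow_mul_rpow_neg_half_le ha1.le ha2 hz hr.1 hr.2).trans ?_
  rw [integral_add hint1 hint2, intervalIntegral.integral_const_mul,
    intervalIntegral.integral_const_mul,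
    integral_rpow (Or.inl ha1), zero_rpow (by linarith), sub_zero]
  have hJ := mul_le_mul_of_nonneg_left (integral_sub_rpow_neg_half_le hz.le)
    (by positivity : 0 ≤ 2 * (z - 1) ^ a)
  have hsplit : (z - 1) ^ (1 + a) = (z - 1) ^ a * (z - 1) := by
    rw [add_comm, rpow_add_one (by linarith)]
  rw [add_comm a 1, hsplit]
  have : 0 < 1 + a := by linarith
  calc _ ≤ 2 * z ^ (-(1 : ℝ) / 2) * ((z - 1) ^ a * (z - 1) / (1 + a)) +
        2 * (z - 1) ^ a * (2 * (z - 1) * z ^ (-(1 : ℝ) / 2)) := by gcongr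
    _ = _ := by field_simp; ring

lemma hyperF_integrand_le {a z r : ℝ} (hz : 1 < z) (hr0 : 0 ≤ r) (hr : r ≤ z - 1) :
    r ^ a * ((z + 1) ^ 2 - r ^ 2) ^ (-(1 : ℝ) / 2) *
        hyperF (1 / 2) (1 / 2) 1 (((z - 1) ^ 2 - r ^ 2) / ((z + 1) ^ 2 - r ^ 2)) ≤
      (1 + log z) * (z + 1) ^ (-(1 : ℝ) / 2) * (r ^ a * (z + 1 - r) ^ (-(1 : ℝ) / 2)) := by
  have hF := hyperF_half_half_one_le_one_add_log hz hr0 hr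
  have hF0 : 0 ≤ hyperF (1 / 2) (1 / 2) 1 (((z - 1) ^ 2 - r ^ 2) / ((z + 1) ^ 2 - r ^ 2)) :=
    hyperF_half_half_one_nonneg (div_nonneg (by nlinarith) (by nlinarith))
  have hK := sq_sub_sq_rpow_neg_half_le hr0 (by linarith : r < z + 1)
  have hra : 0 ≤ r ^ a := rpow_nonneg hr0 a
  have hK0 : 0 ≤ ((z + 1) ^ 2 - r ^ 2) ^ (-(1 : ℝ) / 2) := rpow_nonneg (by nlinarith) _
  have hK1 : 0 ≤ (z + 1) ^ (-(1 : ℝ) / 2) * (z + 1 - r) ^ (-(1 : ℝ) / 2) :=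
    mul_nonneg (rpow_nonneg (by linarith) _) (rpow_nonneg (by linarith) _)
  calc _ ≤ r ^ a * ((z + 1) ^ (-(1 : ℝ) / 2) * (z + 1 - r) ^ (-(1 : ℝ) / 2)) * (1 + log z) := by
        gcongr
    _ = _ := by ring

lemma intervalIntegrable_hyperF_integrand {a z : ℝ} (ha : -1 < a) (hz : 1 < z) :
    IntervalIntegrable (fun r => r ^ a * ((z + 1) ^ 2 - r ^ 2) ^ (-(1 : ℝ) / 2) *
        hyperF (1 / 2) (1 / 2) 1 (((z - 1) ^ 2 - r ^ 2) / ((z + 1) ^ 2 - r ^ 2)))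
      volume 0 (z - 1) := by
  set X := (z - 1) ^ 2 / (z + 1) ^ 2
  have hX0 : 0 ≤ X := by positivity
  have hX1 : X < 1 := by rw [div_lt_one (by positivity)]; nlinarith
  have hD : ∀ r ∈ Set.Icc 0 (z - 1), 0 < (z + 1) ^ 2 - r ^ 2 := fun r hr => by
    nlinarith [hr.1, hr.2]
  have hmaps : Set.MapsTo (fun r => ((z - 1) ^ 2 - r ^ 2) / ((z + 1) ^ 2 - r ^ 2))
      (Set.Icc 0 (z - 1)) (Set.Icc (-X) X) := fun r hr => by
    have h0 : 0 ≤ ((z - 1) ^ 2 - r ^ 2) / ((z + 1) ^ 2 - r ^ 2) :=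
      div_nonneg (by nlinarith [hr.1, hr.2]) (hD r hr).le
    refine ⟨by linarith, ?_⟩
    rw [div_le_div_iff₀ (hD r hr) (by positivity)]
    nlinarith [hD r hr]
  have hcont : ContinuousOn (fun r => ((z + 1) ^ 2 - r ^ 2) ^ (-(1 : ℝ) / 2) *
      hyperF (1 / 2) (1 / 2) 1 (((z - 1) ^ 2 - r ^ 2) / ((z + 1) ^ 2 - r ^ 2)))
      (Set.Icc 0 (z - 1)) :=
    (ContinuousOn.rpow_const (by fun_prop) fun r hr => Or.inl (hD r hr).ne').mul
      ((continuousOn_hyperF_half_half_one hX0 hX1).comp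
        (ContinuousOn.div (by fun_prop) (by fun_prop) fun r hr => (hD r hr).ne') hmaps)
  rw [← Set.uIcc_of_le (by linarith)] at hcont
  simpa only [mul_assoc] using (intervalIntegrable_rpow' ha).mul_continuousOn hcont

theorem statement17 (a : ℝ) (ha1 : -1 < a) (ha2 : a ≤ 0) :
    ∃ C > 0, ∀ z : ℝ, 1 < z →
      (∫ r in (0 : ℝ)..(z - 1),
          r ^ a * ((z + 1) ^ 2 - r ^ 2) ^ (-(1 : ℝ) / 2) *
            hyperF (1 / 2) (1 / 2) 1 (((z - 1) ^ 2 - r ^ 2) / ((z + 1) ^ 2 - r ^ 2)))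
        ≤ C * z⁻¹ * (z - 1) ^ (1 + a) * (1 + Real.log z) := by
  have ha : 0 < 1 + a := by linarith
  refine ⟨2 / (1 + a) + 4, by positivity, fun z hz => ?_⟩
  have hlog : 0 ≤ 1 + log z := by linarith [log_nonneg hz.le]
  have hz1 : 0 ≤ (z + 1) ^ (-(1 : ℝ) / 2) := rpow_nonneg (by linarith) _
  have hz1z : (z + 1) ^ (-(1 : ℝ) / 2) ≤ z ^ (-(1 : ℝ) / 2) :=
    rpow_le_rpow_of_nonpos (by linarith) (by linarith) (by norm_num)
  have hzz : z ^ (-(1 : ℝ) / 2) * z ^ (-(1 : ℝ) / 2) = z⁻¹ := by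
    rw [← rpow_add (by linarith)]; norm_num [rpow_neg_one]
  have hB : 0 ≤ (2 / (1 + a) + 4) * z ^ (-(1 : ℝ) / 2) * (z - 1) ^ (1 + a) := by
    have := rpow_nonneg (by linarith : (0 : ℝ) ≤ z) (-(1 : ℝ) / 2)
    have := rpow_nonneg (by linarith : (0 : ℝ) ≤ z - 1) (1 + a)
    positivity
  calc _ ≤ ∫ r in (0 : ℝ)..(z - 1),
          (1 + log z) * (z + 1) ^ (-(1 : ℝ) / 2) * (r ^ a * (z + 1 - r) ^ (-(1 : ℝ) / 2)) :=
        integral_mono_on (by linarith) (intervalIntegrable_hyperF_integrand ha1 hz)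
          ((intervalIntegrable_rpow_mul_sub_rpow_neg_half ha1 hz.le).const_mul _)
          fun r hr => hyperF_integrand_le hz hr.1 hr.2
    _ ≤ (1 + log z) * (z + 1) ^ (-(1 : ℝ) / 2) *
          ((2 / (1 + a) + 4) * z ^ (-(1 : ℝ) / 2) * (z - 1) ^ (1 + a)) := by
        rw [intervalIntegral.integral_const_mul]
        gcongr
        exact integral_rpow_mul_sub_rpow_neg_half_le ha1 ha2 hz
    _ ≤ (1 + log z) * z ^ (-(1 : ℝ) / 2) *
          ((2 / (1 + a) + 4) * z ^ (-(1 : ℝ) / 2) * (z - 1) ^ (1 + a)) := by gcongr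
    _ = _ := by rw [← hzz]; ring
end
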